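/- The permutation group on F_13 generated by a : t ↦ t+1 and b : t ↦ 3t has order 39, and it acts regularly on each of its two orbits of unordered pairs of points represented by {0,1} and {1,9}; in particular the 78 unordered pairs of distinct points of F_13 split into exactly two orbits of size 39 under this group. -/

import Mathlib

instance : Fact (Nat.Prime 13) := ⟨by norm_num⟩

noncomputable def permA : Equiv.Perm (ZMod 13) := Equiv.addRight 1

noncomputable def permB : Equiv.Perm (ZMod 13) :=
  Equiv.mulLeft₀ (3 : ZMod 13) (by decide)

noncomputable def Gab : Subgroup (Equiv.Perm (ZMod 13)) :=
  Subgroup.closure {permA, permB}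

/-- The orbit of a 2-element subset under `Gab`. -/
noncomputable def pairOrbit (p : Finset (ZMod 13)) : Set (Finset (ZMod 13)) :=
  {s | ∃ g ∈ Gab, s = p.image g}

/-! ### Auxiliary development -/

lemma cube_ne_zero {c : ZMod 13} (h : c ^ 3 = 1) : c ≠ 0 := by
  rintro rfl; simp at h

noncomputable def aff (c d : ZMod 13) (hc : c ≠ 0) : Equiv.Perm (ZMod 13) :=
  (Equiv.mulLeft₀ c hc).trans (Equiv.addRight d)

lemma aff_apply (c d : ZMod 13) (hc : c ≠ 0) (t : ZMod 13) :
    aff c d hc t = c * t + d := rfl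

lemma permA_pow_apply (n : ℕ) (t : ZMod 13) : (permA ^ n) t = t + n := by
  induction n generalizing t with
  | zero => simp [permA]
  | succ n ih =>
    rw [pow_succ, Equiv.Perm.mul_apply, ih]
    have : permA t = t + 1 := rfl
    rw [this]; push_cast; ring

lemma permB_pow_apply (k : ℕ) (t : ZMod 13) : (permB ^ k) t = 3 ^ k * t := by
  induction k generalizing t with
  | zero => simp
  | succ k ih =>
    rw [pow_succ, Equiv.Perm.mul_apply, ih]
    have : permB t = 3 * t := rfl
    rw [this]; ring

lemma permA_mem : permA ∈ Gab := Subgroup.subset_closure (by simp)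
lemma permB_mem : permB ∈ Gab := Subgroup.subset_closure (by simp)

lemma three_pow_cube (j : ℕ) : ((3 : ZMod 13) ^ j) ^ 3 = 1 := by
  rw [← pow_mul, mul_comm, pow_mul]
  have h3 : (3 : ZMod 13) ^ 3 = 1 := by decide
  rw [h3, one_pow]

lemma aff_mem (c d : ZMod 13) (h : c ^ 3 = 1) : aff c d (cube_ne_zero h) ∈ Gab := by
  have hc : c = 3 ^ (0:ℕ) ∨ c = 3 ^ (1:ℕ) ∨ c = 3 ^ (2:ℕ) :=
    (by decide : ∀ c : ZMod 13, c ^ 3 = 1 → c = 3 ^ (0:ℕ) ∨ c = 3 ^ (1:ℕ) ∨ c = 3 ^ (2:ℕ)) c h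
  obtain ⟨k, hk⟩ : ∃ k : ℕ, c = 3 ^ k := by
    rcases hc with h | h | h <;> exact ⟨_, h⟩
  have key : aff c d (cube_ne_zero h) = permA ^ d.val * permB ^ k := by
    ext t
    rw [Equiv.Perm.mul_apply, permA_pow_apply, permB_pow_apply, aff_apply, hk]
    congr 1
    simp [ZMod.natCast_val, ZMod.cast_id]
  rw [key]
  exact mul_mem (pow_mem permA_mem _) (pow_mem permB_mem _)

noncomputable def H : Subgroup (Equiv.Perm (ZMod 13)) where
  carrier := {f | ∃ c d : ZMod 13, c ^ 3 = 1 ∧ ∀ t, f t = c * t + d}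
  one_mem' := ⟨1, 0, one_pow 3, by simp⟩
  mul_mem' := by
    rintro f g ⟨c, d, h1, h2⟩ ⟨c', d', h1', h2'⟩
    refine ⟨c * c', c * d' + d, by rw [mul_pow, h1, h1', mul_one], fun t => ?_⟩
    rw [Equiv.Perm.mul_apply, h2, h2']; ring
  inv_mem' := by
    rintro f ⟨c, d, h1, h2⟩
    have hc : c ≠ 0 := cube_ne_zero h1
    refine ⟨c⁻¹, -(c⁻¹ * d), by rw [inv_pow, h1, inv_one], fun t => ?_⟩
    apply f.injective
    rw [Equiv.Perm.coe_inv, Equiv.apply_symm_apply, h2]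
    field_simp
    ring

lemma Gab_eq : Gab = H := by
  apply le_antisymm
  · rw [Gab, Subgroup.closure_le]
    rintro f (rfl | rfl)
    · exact ⟨1, 1, one_pow 3, fun t => by simp [permA]⟩
    · exact ⟨3, 0, by decide, fun t => by simp [permB]⟩
  · rintro f ⟨c, d, h1, h2⟩
    have : f = aff c d (cube_ne_zero h1) := by
      ext t; rw [aff_apply, h2]
    rw [this]
    exact aff_mem c d h1

def S1 : Finset (Finset (ZMod 13)) :=
  Finset.image (fun p : ZMod 13 × Fin 3 => {p.1, 3 ^ (p.2 : ℕ) + p.1}) Finset.univ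
def S2 : Finset (Finset (ZMod 13)) :=
  Finset.image (fun p : ZMod 13 × Fin 3 => {3 ^ (p.2 : ℕ) + p.1, 9 * 3 ^ (p.2 : ℕ) + p.1})
    Finset.univ

lemma c_eq_pow {c : ZMod 13} (h : c ^ 3 = 1) : ∃ j : Fin 3, c = 3 ^ (j : ℕ) := by
  have hc : c = 3 ^ ((0 : Fin 3) : ℕ) ∨ c = 3 ^ ((1 : Fin 3) : ℕ) ∨ c = 3 ^ ((2 : Fin 3) : ℕ) :=
    (by decide : ∀ c : ZMod 13, c ^ 3 = 1 → c = 3 ^ ((0 : Fin 3) : ℕ) ∨ c = 3 ^ ((1 : Fin 3) : ℕ) ∨ c = 3 ^ ((2 : Fin 3) : ℕ)) c h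
  rcases hc with h | h | h <;> exact ⟨_, h⟩

lemma image_pair (g : Equiv.Perm (ZMod 13)) (a b : ZMod 13) :
    ({a, b} : Finset (ZMod 13)).image g = {g a, g b} := by
  simp [Finset.image_insert]

lemma orbit1_eq : pairOrbit {0, 1} = ↑S1 := by
  ext s
  constructor
  · rintro ⟨g, hg, rfl⟩
    rw [Gab_eq] at hg
    obtain ⟨c, d, h1, h2⟩ := hg
    obtain ⟨j, rfl⟩ := c_eq_pow h1
    rw [image_pair, h2, h2]
    refine Finset.mem_coe.2 (Finset.mem_image.2 ⟨(d, j), Finset.mem_univ _, ?_⟩)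
    norm_num [mul_comm]
  · intro hs
    obtain ⟨⟨d, j⟩, -, rfl⟩ := Finset.mem_image.1 (Finset.mem_coe.1 hs)
    refine ⟨aff (3 ^ (j : ℕ)) d (cube_ne_zero (three_pow_cube _)),
      aff_mem _ _ (three_pow_cube _), ?_⟩
    rw [image_pair, aff_apply, aff_apply]
    norm_num [mul_comm]

lemma orbit2_eq : pairOrbit {1, 9} = ↑S2 := by
  ext s
  constructor
  · rintro ⟨g, hg, rfl⟩
    rw [Gab_eq] at hg
    obtain ⟨c, d, h1, h2⟩ := hg
    obtain ⟨j, rfl⟩ := c_eq_pow h1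
    rw [image_pair, h2, h2]
    refine Finset.mem_coe.2 (Finset.mem_image.2 ⟨(d, j), Finset.mem_univ _, ?_⟩)
    norm_num [mul_comm]
  · intro hs
    obtain ⟨⟨d, j⟩, -, rfl⟩ := Finset.mem_image.1 (Finset.mem_coe.1 hs)
    refine ⟨aff (3 ^ (j : ℕ)) d (cube_ne_zero (three_pow_cube _)),
      aff_mem _ _ (three_pow_cube _), ?_⟩
    rw [image_pair, aff_apply, aff_apply]
    norm_num [mul_comm]

lemma S1_card2 : ∀ s ∈ S1, s.card = 2 := by
  intro s hs
  obtain ⟨⟨d, j⟩, -, rfl⟩ := Finset.mem_image.1 hs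
  refine Finset.card_pair ?_
  intro h
  have h3 : (3 : ZMod 13) ^ (j : ℕ) = 0 := by
    have h' : (3 : ZMod 13) ^ (j : ℕ) + d - d = 0 := by rw [← h]; ring
    rw [← h']; ring
  exact pow_ne_zero _ (by decide : (3 : ZMod 13) ≠ 0) h3

lemma S2_card2 : ∀ s ∈ S2, s.card = 2 := by
  intro s hs
  obtain ⟨⟨d, j⟩, -, rfl⟩ := Finset.mem_image.1 hs
  refine Finset.card_pair ?_
  intro h
  have h8 : (8 : ZMod 13) * 3 ^ (j : ℕ) = 0 := by
    have : (9 : ZMod 13) * 3 ^ (j : ℕ) + d - (3 ^ (j : ℕ) + d) = 0 := by rw [← h]; ring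
    rw [← this]; ring
  exact mul_ne_zero (by decide) (pow_ne_zero _ (by decide : (3 : ZMod 13) ≠ 0)) h8

set_option maxRecDepth 4000 in
lemma union_card : (S1 ∪ S2).card = 78 := by decide

lemma filter_eq : (Finset.univ.filter (fun s : Finset (ZMod 13) => s.card = 2))
    = Finset.powersetCard 2 Finset.univ := by
  rw [Finset.powersetCard_eq_filter, Finset.powerset_univ]

lemma pc_card : (Finset.powersetCard 2 (Finset.univ : Finset (ZMod 13))).card = 78 := by
  simp [Finset.card_powersetCard]
  norm_num [Nat.choose]

lemma union_eq : S1 ∪ S2 = Finset.powersetCard 2 (Finset.univ : Finset (ZMod 13)) := by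
  apply Finset.eq_of_subset_of_card_le
  · intro s hs
    rcases Finset.mem_union.1 hs with h | h
    · exact Finset.mem_powersetCard_univ.2 (S1_card2 s h)
    · exact Finset.mem_powersetCard_univ.2 (S2_card2 s h)
  · rw [pc_card, union_card]

set_option maxRecDepth 4000 in
lemma S1_card : S1.card = 39 := by decide

set_option maxRecDepth 4000 in
lemma S2_card : S2.card = 39 := by decide

set_option maxRecDepth 4000 in
lemma not_mem_S1 : ({1, 9} : Finset (ZMod 13)) ∉ S1 := by decide

lemma card_Gab : Nat.card Gab = 39 := by
  have e : (ZMod 13 × Fin 3) ≃ Gab := by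
    refine Equiv.ofBijective
      (fun p => ⟨aff (3 ^ ((p.2 : Fin 3) : ℕ)) p.1 (cube_ne_zero (three_pow_cube _)),
        aff_mem _ _ (three_pow_cube _)⟩) ⟨?_, ?_⟩
    · rintro ⟨d, j⟩ ⟨d', j'⟩ h
      have h0 := congrArg (fun f : Gab => (f : Equiv.Perm (ZMod 13)) 0) h
      have h1 := congrArg (fun f : Gab => (f : Equiv.Perm (ZMod 13)) 1) h
      simp only [aff_apply, mul_zero, zero_add, mul_one] at h0 h1
      have hj : (3 : ZMod 13) ^ (j : ℕ) = 3 ^ (j' : ℕ) := by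
        rw [h0] at h1
        exact add_right_cancel h1
      have := (by decide : ∀ j j' : Fin 3,
        (3 : ZMod 13) ^ (j : ℕ) = 3 ^ (j' : ℕ) → j = j') j j' hj
      simp [h0, this]
    · rintro ⟨f, hf⟩
      rw [Gab_eq] at hf
      obtain ⟨c, d, h1, h2⟩ := hf
      obtain ⟨j, rfl⟩ := c_eq_pow h1
      refine ⟨(d, j), ?_⟩
      apply Subtype.ext
      ext t
      rw [aff_apply, h2]
  rw [← Nat.card_congr e]
  simp [Nat.card_eq_fintype_card]

theorem Gab_order_and_pair_orbits :
    Nat.card Gab = 39 ∧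
    (Finset.univ.filter (fun s : Finset (ZMod 13) => s.card = 2)).card = 78 ∧
    (pairOrbit {0, 1}).ncard = 39 ∧
    (pairOrbit {1, 9}).ncard = 39 ∧
    ({1, 9} : Finset (ZMod 13)) ∉ pairOrbit {0, 1} ∧
    (∀ s : Finset (ZMod 13), s.card = 2 →
      s ∈ pairOrbit {0, 1} ∪ pairOrbit {1, 9}) := by
  refine ⟨card_Gab, ?_, ?_, ?_, ?_, ?_⟩
  · rw [filter_eq, pc_card]
  · rw [orbit1_eq, Set.ncard_coe_finset, S1_card]
  · rw [orbit2_eq, Set.ncard_coe_finset, S2_card]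
  · rw [orbit1_eq]
    simpa using not_mem_S1
  · intro s hs
    rw [orbit1_eq, orbit2_eq, ← Finset.coe_union]
    have : s ∈ S1 ∪ S2 := by
      rw [union_eq]
      exact Finset.mem_powersetCard_univ.2 hs
    exact Finset.mem_coe.2 this
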